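/- arXiv:2102.09901 — 3 statements merged into one kernel-verified Lean document; each statement's English description precedes it below -/
import Mathlib

section
/- Let M be a matroid on a finite set E in which every set in a family X of subsets of E is a circuit, and let F ⊆ E. For any proper X-sequence S = (X₁,…,X_k) (meaning each Xᵢ ∈ X and Xᵢ ⊄ X₁∪…∪X_{i-1} for all i ≥ 2), the rank of F in M satisfies r_M(F) ≤ |F ∪ (X₁∪…∪X_k)| − k. -/
open Set

variable {α : Type*}

/-- `C` is a circuit of `M`: a minimal dependent subset of the ground set. -/
def Matroid.IsCircuit' (M : Matroid α) (C : Set α) : Prop :=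
  C ⊆ M.E ∧ ¬ M.Indep C ∧ ∀ e ∈ C, M.Indep (C \ {e})

/-- `M` is an `X`-matroid on `E`: a matroid with ground set `E` in which every member of the
family `X` is a circuit. -/
def IsXMatroid (E : Set α) (X : Set (Set α)) (M : Matroid α) : Prop :=
  M.E = E ∧ ∀ C ∈ X, M.IsCircuit' C

/-- The union of a list of sets. -/
def unionList (S : List (Set α)) : Set α := ⋃ Y ∈ S, Y

/-- A proper `X`-sequence: a list of members of `X` such that no term is contained in the
union of the preceding terms. -/
def ProperSeq (X : Set (Set α)) (S : List (Set α)) : Prop :=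
  (∀ Y ∈ S, Y ∈ X) ∧
  ∀ i : Fin S.length, 0 < i.1 → ¬ (S.get i ⊆ unionList (S.take i.1))

/-- `val(F, S) = |F ∪ ⋃ S| - |S|`. -/
noncomputable def valSeq (F : Set α) (S : List (Set α)) : ℤ :=
  ((F ∪ unionList S).ncard : ℤ) - S.length

/-- `val_X(F)`: the minimum of `val(F, S)` over all proper `X`-sequences `S`. -/
noncomputable def valX (X : Set (Set α)) (F : Set α) : ℤ :=
  sInf {v : ℤ | ∃ S : List (Set α), ProperSeq X S ∧ v = valSeq F S}

/-- The rank of a set `F` in a matroid `M`: the largest size of an independent subset of `F`. -/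
noncomputable def mrk (M : Matroid α) (F : Set α) : ℕ :=
  sSup {n : ℕ | ∃ I ⊆ F, M.Indep I ∧ I.ncard = n}

/-- The weak order on matroids: `M ⪯ N` iff every independent set of `M` is independent in `N`. -/
def WeakLE (M N : Matroid α) : Prop := ∀ I : Set α, M.Indep I → N.Indep I

/-! A proper sequence of circuits `X₁, …, X_k` has nullity `|⋃ Xᵢ| - r(⋃ Xᵢ)` at least `k`: each
new circuit `Xᵢ` has an element `e` outside the earlier union, and `e` lies in the closure of
`Xᵢ \ {e}`, so adding `Xᵢ` raises the size by `|Xᵢ \ ⋃_{j<i} Xⱼ|` but the rank by at most one less.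
Nullity only grows on passing to the superset `F ∪ ⋃ Xᵢ`, and `r(F) ≤ r(F ∪ ⋃ Xᵢ)`. -/

lemma Matroid.IsCircuit'.isCircuit {M : Matroid α} {C : Set α} (h : M.IsCircuit' C) :
    M.IsCircuit C :=
  Matroid.isCircuit_iff_dep_forall_sdiff_singleton_indep.2 ⟨⟨h.2.1, h.1⟩, h.2.2⟩

lemma Matroid.IsCircuit.eRk_union_add_one_le {M : Matroid α} {C U : Set α} (hC : M.IsCircuit C)
    (hCU : ¬ C ⊆ U) : M.eRk (U ∪ C) + 1 ≤ M.eRk U + (C \ U).encard := by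
  obtain ⟨e, heC, heU⟩ := not_subset.1 hCU
  have hUC : U ∪ C ⊆ U ∪ M.closure (C \ {e}) :=
    union_subset_union_right U (hC.subset_closure_sdiff_singleton e)
  have hsplit : U ∪ C \ {e} = U ∪ (C \ U) \ {e} := by
    ext x; by_cases hx : x ∈ U <;> simp [hx]
  calc M.eRk (U ∪ C) + 1 ≤ M.eRk (U ∪ (C \ U) \ {e}) + 1 := by
        gcongr
        exact (M.eRk_mono hUC).trans_eq (hsplit ▸ M.eRk_union_closure_right_eq U (C \ {e}))
    _ ≤ M.eRk U + ((C \ U) \ {e}).encard + 1 := by grw [M.eRk_union_le_eRk_add_encard]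
    _ = M.eRk U + (C \ U).encard := by
        rw [add_assoc, encard_sdiff_singleton_add_one (show e ∈ C \ U from ⟨heC, heU⟩)]

lemma Matroid.eRk_add_le_encard_of_subset {M : Matroid α} {U W : Set α} {n : ℕ∞} (hUW : U ⊆ W)
    (h : M.eRk U + n ≤ U.encard) : M.eRk W + n ≤ W.encard :=
  calc M.eRk W + n ≤ M.eRk U + (W \ U).encard + n := by
        grw [← M.eRk_union_le_eRk_add_encard, union_sdiff_cancel hUW]
    _ ≤ (W \ U).encard + U.encard := by grw [add_right_comm, h, add_comm]
    _ = W.encard := encard_sdiff_add_encard_of_subset hUW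

lemma mrk_le_eRk (M : Matroid α) (F : Set α) : (mrk M F : ℕ∞) ≤ M.eRk F := by
  by_cases htop : M.eRk F = ⊤
  · simp [htop]
  lift M.eRk F to ℕ using htop with m hm
  refine Nat.cast_le.2 (csSup_le ⟨0, ∅, empty_subset F, M.empty_indep, ncard_empty α⟩ ?_)
  rintro n ⟨I, hIF, hI, rfl⟩
  exact_mod_cast (ncard_le_encard I).trans (hm ▸ hI.encard_le_eRk_of_subset hIF)

lemma unionList_append (T : List (Set α)) (Y : Set α) :
    unionList (T ++ [Y]) = unionList T ∪ Y := by
  simp [unionList, iUnion_or, iUnion_union_distrib]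

namespace ProperSeq

variable {X : Set (Set α)} {T : List (Set α)} {Y : Set α}

lemma of_append (h : ProperSeq X (T ++ [Y])) : ProperSeq X T := by
  refine ⟨fun Z hZ => h.1 Z (by simp [hZ]), fun i hi => ?_⟩
  have hlen : i.1 < (T ++ [Y]).length := by simp only [List.length_append]; omega
  simpa [List.getElem_append_left, List.take_append_of_le_length i.2.le] using h.2 ⟨i.1, hlen⟩ hi

lemma not_subset_unionList_of_append (h : ProperSeq X (T ++ [Y])) (hY : Y.Nonempty) :
    ¬ Y ⊆ unionList T := by
  by_cases hT : T = []
  · subst hT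
    simpa [unionList, ← nonempty_iff_ne_empty] using hY
  simpa [List.getElem_concat_length] using
    h.2 ⟨T.length, by simp⟩ (List.length_pos_iff.2 hT)

lemma eRk_add_length_le {M : Matroid α} (hX : ∀ C ∈ X, M.IsCircuit C) {S : List (Set α)}
    (hS : ProperSeq X S) : M.eRk (unionList S) + S.length ≤ (unionList S).encard := by
  induction S using List.reverseRecOn with
  | nil => simp [unionList]
  | append_singleton T Y ih =>
    have hY : M.IsCircuit Y := hX Y (hS.1 Y (by simp))
    rw [unionList_append, List.length_append, List.length_singleton, Nat.cast_add, Nat.cast_one]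
    calc M.eRk (unionList T ∪ Y) + (T.length + 1)
        = M.eRk (unionList T ∪ Y) + 1 + T.length := by ring
      _ ≤ M.eRk (unionList T) + T.length + (Y \ unionList T).encard := by
        grw [hY.eRk_union_add_one_le (hS.not_subset_unionList_of_append hY.nonempty),
          add_right_comm]
      _ ≤ (unionList T).encard + (Y \ unionList T).encard := by grw [ih hS.of_append]
      _ = (unionList T ∪ Y).encard := by
        rw [← encard_union_eq disjoint_sdiff_right, union_sdiff_self]

end ProperSeq

theorem rank_le_valSeq_general (E : Set α) (hE : E.Finite) (X : Set (Set α))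
    (M : Matroid α) (hM : IsXMatroid E X M)
    (F : Set α) (hF : F ⊆ E) (S : List (Set α)) (hS : ProperSeq X S) :
    (mrk M F : ℤ) ≤ valSeq F S := by
  obtain ⟨rfl, hX⟩ := hM
  have hcirc : ∀ C ∈ X, M.IsCircuit C := fun C hC => (hX C hC).isCircuit
  have hU : unionList S ⊆ M.E := iUnion₂_subset fun Y hY => (hcirc Y (hS.1 Y hY)).subset_ground
  have hW : (F ∪ unionList S).Finite := hE.subset (union_subset hF hU)
  have key : (mrk M F : ℕ∞) + S.length ≤ (F ∪ unionList S).encard :=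
    calc (mrk M F : ℕ∞) + S.length ≤ M.eRk (F ∪ unionList S) + S.length := by
          grw [mrk_le_eRk, M.eRk_mono subset_union_left]
      _ ≤ (F ∪ unionList S).encard :=
          M.eRk_add_le_encard_of_subset subset_union_right (hS.eRk_add_length_le hcirc)
  rw [← hW.cast_ncard_eq] at key
  unfold valSeq
  norm_cast at key
  omega

theorem rank_le_valSeq (E : Set α) (hE : E.Finite) (X : Set (Set α))
    (hXE : ∀ Y ∈ X, Y ⊆ E) (M : Matroid α) (hM : IsXMatroid E X M)
    (F : Set α) (hF : F ⊆ E) (S : List (Set α)) (hS : ProperSeq X S) :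
    (mrk M F : ℤ) ≤ valSeq F S :=
  rank_le_valSeq_general E hE X M hM F hF S hS
end

section
/- Let M be an X-matroid on E, F ⊆ E, and S = (X₁,…,X_k) a proper X-sequence with r_M(F) = |F ∪ ⋃ᵢ Xᵢ| − k. Then r_M(F − e) = r_M(F) − 1 for every e ∈ F \ ⋃ᵢ Xᵢ, and r_M(F + e) = r_M(F) for every e ∈ ⋃ᵢ Xᵢ. -/
open Set

variable {α : Type*}

/-! Each member `Xᵢ` of a proper sequence of circuits has an element `eᵢ` outside
`X₁ ∪ ⋯ ∪ Xᵢ₋₁`; so `Xᵢ` is untouched by the deletion of `eₖ, …, eᵢ₊₁`, and `eᵢ` is still in the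
closure of what remains. Deleting `eₖ, …, e₁` in turn from any `B ⊇ ⋃ Xᵢ` therefore keeps the
rank, so `r(B) ≤ |B| - k`. With `B = F ∪ ⋃ Xᵢ` this squeezes `r(F ∪ ⋃ Xᵢ)` down to `r(F)` when
`r(F) = val(F, S)`; with `B = (F - e) ∪ ⋃ Xᵢ` it gives `r(F - e) ≤ r(F) - 1`. -/

lemma unionList_append_singleton (T : List (Set α)) (C : Set α) :
    unionList (T ++ [C]) = unionList T ∪ C := by
  ext x; simp [unionList, or_comm]

namespace ProperSeq

variable {X Y : Set (Set α)} {S T : List (Set α)} {C : Set α}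

lemma mono (hS : ProperSeq X S) (hXY : X ⊆ Y) : ProperSeq Y S :=
  ⟨fun Z hZ => hXY (hS.1 Z hZ), hS.2⟩

lemma of_append_singleton (h : ProperSeq X (T ++ [C])) : ProperSeq X T := by
  refine ⟨fun Z hZ => h.1 Z (by simp [hZ]), fun i hi => ?_⟩
  have := h.2 ⟨i.1, by simp⟩ hi
  simp only [List.get_eq_getElem] at this ⊢
  rwa [List.getElem_append_left i.2, List.take_append_of_le_length i.2.le] at this

lemma not_subset_of_append_singleton (h : ProperSeq X (T ++ [C])) (hT : T ≠ []) :
    ¬ C ⊆ unionList T := by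
  simpa using h.2 ⟨T.length, by simp⟩ (List.length_pos_iff.mpr hT)

end ProperSeq

namespace Matroid

variable {M : Matroid α} {B C : Set α} {S : List (Set α)}

lemma IsCircuit'.isCircuit_s1 (hC : M.IsCircuit' C) : M.IsCircuit C :=
  isCircuit_iff_dep_forall_sdiff_singleton_indep.mpr ⟨⟨hC.2.1, hC.1⟩, hC.2.2⟩

lemma eRk_add_length_le_encard (hS : ProperSeq {C | M.IsCircuit C} S)
    (hSB : unionList S ⊆ B) : M.eRk B + S.length ≤ B.encard := by
  induction S using List.reverseRecOn generalizing B with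
  | nil => simpa using M.eRk_le_encard B
  | append_singleton T C ih =>
    rw [unionList_append_singleton, union_subset_iff] at hSB
    obtain ⟨hTB, hCB⟩ := hSB
    have hC : M.IsCircuit C := hS.1 C (by simp)
    have hCT : ¬ C ⊆ unionList T := by
      rcases eq_or_ne T [] with rfl | hT
      · simpa [unionList, subset_empty_iff] using hC.nonempty.ne_empty
      · exact hS.not_subset_of_append_singleton hT
    obtain ⟨e, heC, heT⟩ := not_subset.mp hCT
    have hrk : M.eRk (B \ {e}) = M.eRk B := by
      have he : e ∈ M.closure (B \ {e}) := M.closure_subset_closure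
        (sdiff_subset_sdiff_left hCB) (hC.mem_closure_sdiff_singleton_of_mem heC)
      rw [← M.eRk_closure_eq, closure_sdiff_singleton_eq_closure he, M.eRk_closure_eq]
    have hIH := ih hS.of_append_singleton (B := B \ {e})
      (fun x hx => ⟨hTB hx, fun hxe => heT (hxe ▸ hx)⟩)
    rw [hrk] at hIH
    calc M.eRk B + (T ++ [C]).length = M.eRk B + T.length + 1 := by simp [add_assoc]
      _ ≤ (B \ {e}).encard + 1 := by gcongr
      _ = B.encard := encard_sdiff_singleton_add_one (hCB heC)

end Matroid

section mrk

variable {M : Matroid α} {A B : Set α}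

lemma cast_mrk_eq_eRk (M : Matroid α) (hA : A.Finite) : (mrk M A : ℕ∞) = M.eRk A := by
  obtain ⟨I, hI⟩ := M.exists_isBasis' A
  have hIfin : I.Finite := hA.subset hI.subset
  have hmax : IsGreatest {n : ℕ | ∃ J ⊆ A, M.Indep J ∧ J.ncard = n} I.ncard := by
    refine ⟨⟨I, hI.subset, hI.indep, rfl⟩, ?_⟩
    rintro n ⟨J, hJA, hJ, rfl⟩
    have hle := hJ.encard_le_eRk_of_subset hJA
    rwa [← hI.encard_eq_eRk, ← (hA.subset hJA).cast_ncard_eq, ← hIfin.cast_ncard_eq,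
      Nat.cast_le] at hle
  rw [mrk, hmax.csSup_eq, hIfin.cast_ncard_eq, hI.encard_eq_eRk]

lemma mrk_mono (hB : B.Finite) (hAB : A ⊆ B) : mrk M A ≤ mrk M B := by
  have h := M.eRk_mono hAB
  rwa [← cast_mrk_eq_eRk M (hB.subset hAB), ← cast_mrk_eq_eRk M hB, Nat.cast_le] at h

lemma mrk_le_mrk_sdiff_singleton_add_one (hA : A.Finite) (e : α) :
    mrk M A ≤ mrk M (A \ {e}) + 1 := by
  have h := (M.eRk_mono (subset_insert_sdiff_singleton e A)).trans
    (M.eRk_insert_le_add_one e (A \ {e}))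
  rwa [← cast_mrk_eq_eRk M hA, ← cast_mrk_eq_eRk M hA.sdiff, ← Nat.cast_one, ← Nat.cast_add,
    Nat.cast_le] at h

lemma mrk_union_le_valSeq (F : Set α) {S : List (Set α)} (hS : ProperSeq {C | M.IsCircuit C} S)
    (hfin : (F ∪ unionList S).Finite) : (mrk M (F ∪ unionList S) : ℤ) ≤ valSeq F S := by
  have h := M.eRk_add_length_le_encard hS (subset_union_right (s := F))
  rw [← cast_mrk_eq_eRk M hfin, ← hfin.cast_ncard_eq, ← Nat.cast_add, Nat.cast_le] at h
  rw [valSeq]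
  omega

end mrk

lemma valSeq_sdiff_singleton {F : Set α} {S : List (Set α)} {e : α} (he : e ∈ F \ unionList S)
    (hfin : (F ∪ unionList S).Finite) : valSeq (F \ {e}) S = valSeq F S - 1 := by
  have hunion : F \ {e} ∪ unionList S = (F ∪ unionList S) \ {e} := by
    rw [union_sdiff_distrib, sdiff_singleton_eq_self he.2]
  have hpos : 0 < (F ∪ unionList S).ncard := (ncard_pos hfin).mpr ⟨e, .inl he.1⟩
  rw [valSeq, valSeq, hunion, ncard_sdiff_singleton_of_mem (.inl he.1)]
  omega

theorem rank_eq_valSeq_consequences_general (E : Set α) (hE : E.Finite) (X : Set (Set α))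
    (M : Matroid α) (hM : IsXMatroid E X M)
    (F : Set α) (hF : F ⊆ E) (S : List (Set α)) (hS : ProperSeq X S)
    (heq : (mrk M F : ℤ) = valSeq F S) :
    (∀ e ∈ F \ unionList S, (mrk M (F \ {e}) : ℤ) = (mrk M F : ℤ) - 1) ∧
    (∀ e ∈ unionList S, mrk M (insert e F) = mrk M F) := by
  obtain ⟨rfl, hXM⟩ := hM
  have hSM : ProperSeq {C | M.IsCircuit C} S := hS.mono fun C hC => (hXM C hC).isCircuit_s1
  have hUE : unionList S ⊆ M.E := iUnion₂_subset fun C hC => (hSM.1 C hC).subset_ground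
  have hfin : (F ∪ unionList S).Finite := hE.subset (union_subset hF hUE)
  have hFU := mrk_union_le_valSeq F hSM hfin
  constructor
  · intro e he
    have hfin' : (F \ {e} ∪ unionList S).Finite :=
      hfin.subset (union_subset_union_left _ sdiff_subset)
    have h1 := mrk_mono (M := M) hfin' (subset_union_left (t := unionList S))
    have h2 := mrk_union_le_valSeq (F \ {e}) hSM hfin'
    have h3 := mrk_le_mrk_sdiff_singleton_add_one (M := M) (hfin.subset subset_union_left) e
    rw [valSeq_sdiff_singleton he hfin] at h2
    omega
  · intro e he
    have hsub : insert e F ⊆ F ∪ unionList S := insert_subset (.inr he) subset_union_left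
    have h1 := mrk_mono (M := M) (hfin.subset hsub) (subset_insert e F)
    have h2 := mrk_mono (M := M) hfin hsub
    omega

theorem rank_eq_valSeq_consequences (E : Set α) (hE : E.Finite) (X : Set (Set α))
    (hXE : ∀ Y ∈ X, Y ⊆ E) (M : Matroid α) (hM : IsXMatroid E X M)
    (F : Set α) (hF : F ⊆ E) (S : List (Set α)) (hS : ProperSeq X S)
    (heq : (mrk M F : ℤ) = valSeq F S) :
    (∀ e ∈ F \ unionList S, (mrk M (F \ {e}) : ℤ) = (mrk M F : ℤ) - 1) ∧
    (∀ e ∈ unionList S, mrk M (insert e F) = mrk M F) :=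
  rank_eq_valSeq_consequences_general E hE X M hM F hF S hS heq
end

section
/- Let X be a family of subsets of a finite set E and M a loopless X-matroid on E. Suppose that for every connected flat F of M there is a proper X-sequence S with r_M(F) = val(F,S). Then r_M = val_X, and M is the unique maximal X-matroid on E in the weak order. -/
open Set

variable {α : Type*}

/-- A set `F` is connected in `M` if every two elements of `F` lie on a common circuit
contained in `F`. -/
def ConnectedSet (M : Matroid α) (F : Set α) : Prop :=
  ∀ e ∈ F, ∀ f ∈ F, ∃ C : Set α, M.IsCircuit' C ∧ e ∈ C ∧ f ∈ C ∧ C ⊆ F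

/-!
A proper sequence of circuits `S` satisfies `r(B) + |S| ≤ |B|` whenever `⋃ S ⊆ B`, because each
term brings a new element that is spanned by the rest of that term; hence `r ≤ val_X`.
Conversely, by induction on rank, every flat `F` has a proper sequence with `val(F, S) ≤ r(F)`:
independent flats take the empty sequence, connected flats are the hypothesis, and a disconnected
flat splits as `F₁ ∪ F₂` with `r(F) = r(F₁) + r(F₂)`. Sequences for the two parts concatenate to
a proper sequence, since by submodularity the sets `Fᵢ ∪ ⋃ Sᵢ` are disjoint. Maximality follows:
a set `I` independent in some `X`-matroid `N` has `|I| = r_N(I) ≤ val_X(I) = r_M(I)`.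
-/

namespace Matroid

variable {M : Matroid α} {C C₁ C₂ F F₁ F₂ : Set α} {e f : α}

lemma isCircuit'_iff : M.IsCircuit' C ↔ M.IsCircuit C := by
  rw [isCircuit_iff_dep_forall_sdiff_singleton_indep, IsCircuit', Dep]
  tauto

lemma connectedSet_iff : ConnectedSet M F ↔
    ∀ e ∈ F, ∀ f ∈ F, ∃ C ⊆ F, M.IsCircuit C ∧ e ∈ C ∧ f ∈ C := by
  simp only [ConnectedSet, isCircuit'_iff]
  grind

/-- Induction on `|C₁ ∪ C₂|`: two strong eliminations give a circuit `C₄ ∋ f` meeting `C₁` such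
that `C₁ ∪ C₄` misses an element of `C₂`. -/
lemma IsCircuit.exists_isCircuit_of_inter_nonempty [M.Finitary] (hC₁ : M.IsCircuit C₁)
    (hC₂ : M.IsCircuit C₂) (hC₁₂ : (C₁ ∩ C₂).Nonempty) (he : e ∈ C₁) (hf : f ∈ C₂) :
    ∃ C ⊆ C₁ ∪ C₂, M.IsCircuit C ∧ e ∈ C ∧ f ∈ C := by
  obtain ⟨n, hn⟩ : ∃ n, (C₁ ∪ C₂).ncard = n := ⟨_, rfl⟩
  induction n using Nat.strong_induction_on generalizing C₁ C₂ with
  | _ n ih =>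
  by_cases hfC₁ : f ∈ C₁
  · exact ⟨C₁, subset_union_left, hC₁, he, hfC₁⟩
  by_cases heC₂ : e ∈ C₂
  · exact ⟨C₂, subset_union_right, hC₂, heC₂, hf⟩
  obtain ⟨g, hg₁, hg₂⟩ := hC₁₂
  obtain ⟨C₃, hC₃U, hC₃, heC₃⟩ := hC₁.strong_elimination hC₂ hg₁ hg₂ he heC₂
  by_cases hfC₃ : f ∈ C₃
  · exact ⟨C₃, hC₃U.trans sdiff_subset, hC₃, heC₃, hfC₃⟩
  obtain ⟨h, hhC₃, hhC₁⟩ : ∃ h ∈ C₃, h ∉ C₁ := by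
    by_contra! hC₃C₁
    exact (hC₃U (hC₁.eq_of_superset_isCircuit hC₃ hC₃C₁ ▸ hg₁)).2 rfl
  have hhC₂ : h ∈ C₂ := ((hC₃U hhC₃).1).resolve_left hhC₁
  obtain ⟨C₄, hC₄U, hC₄, hfC₄⟩ := hC₂.strong_elimination hC₃ hhC₂ hhC₃ hf hfC₃
  have hC₄C₁₂ : C₄ ⊆ (C₁ ∪ C₂) \ {h} := fun x hx ↦
    ⟨(hC₄U hx).1.elim Or.inr fun hx₃ ↦ (hC₃U hx₃).1, (hC₄U hx).2⟩
  by_cases heC₄ : e ∈ C₄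
  · exact ⟨C₄, hC₄C₁₂.trans sdiff_subset, hC₄, heC₄, hfC₄⟩
  obtain ⟨k, hkC₄, hkC₂⟩ : ∃ k ∈ C₄, k ∉ C₂ := by
    by_contra! hC₄C₂
    exact (hC₄U (hC₂.eq_of_superset_isCircuit hC₄ hC₄C₂ ▸ hhC₂)).2 rfl
  have hkC₁ : k ∈ C₁ := ((hC₄C₁₂ hkC₄).1).resolve_right hkC₂
  have hsub : C₁ ∪ C₄ ⊆ (C₁ ∪ C₂) \ {h} :=
    union_subset (fun x hx ↦ ⟨Or.inl hx, by rintro rfl; exact hhC₁ hx⟩) hC₄C₁₂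
  have hfin : (C₁ ∪ C₂).Finite := hC₁.finite.union hC₂.finite
  have hlt : (C₁ ∪ C₄).ncard < n := hn ▸
    (ncard_le_ncard hsub (hfin.subset sdiff_subset)).trans_lt
      (ncard_sdiff_singleton_lt_of_mem (Or.inr hhC₂) hfin)
  obtain ⟨C, hC, hCc, heC, hfC⟩ := ih _ hlt hC₁ hC₄ ⟨k, hkC₁, hkC₄⟩ he hfC₄ rfl
  exact ⟨C, hC.trans (hsub.trans sdiff_subset), hCc, heC, hfC⟩

lemma eRk_add_eRk_le_of_forall_isCircuit (hdisj : Disjoint F₁ F₂)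
    (h : ∀ C ⊆ F₁ ∪ F₂, M.IsCircuit C → C ⊆ F₁ ∨ C ⊆ F₂) :
    M.eRk F₁ + M.eRk F₂ ≤ M.eRk (F₁ ∪ F₂) := by
  obtain ⟨I₁, hI₁⟩ := M.exists_isBasis' F₁
  obtain ⟨I₂, hI₂⟩ := M.exists_isBasis' F₂
  have hI : M.Indep (I₁ ∪ I₂) := by
    rw [indep_iff_forall_subset_not_isCircuit (union_subset hI₁.indep.subset_ground
      hI₂.indep.subset_ground)]
    intro C hCI hC
    rcases h C (hCI.trans (union_subset_union hI₁.subset hI₂.subset)) hC with hC₁ | hC₂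
    · exact hC.not_indep (hI₁.indep.subset (Disjoint.subset_left_of_subset_union hCI
        (hdisj.mono hC₁ hI₂.subset)))
    · exact hC.not_indep (hI₂.indep.subset (Disjoint.subset_right_of_subset_union hCI
        (hdisj.mono hI₁.subset hC₂).symm))
  rw [← hI₁.encard_eq_eRk, ← hI₂.encard_eq_eRk, ← encard_union_eq (hdisj.mono hI₁.subset
    hI₂.subset), ← hI.eRk_eq_encard]
  exact M.eRk_mono (union_subset_union hI₁.subset hI₂.subset)

/-- `F₁` is the class of `e` under "lying on a common circuit inside `F`", a relation that
is transitive by `IsCircuit.exists_isCircuit_of_inter_nonempty`, so no circuit inside `F`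
crosses `F₁`. -/
lemma exists_eRk_add_eRk_le_of_not_connectedSet [M.Finitary] (hF : F.Nontrivial)
    (hFc : ¬ ConnectedSet M F) :
    ∃ F₁ F₂, F₁ ∪ F₂ = F ∧ F₁.Nonempty ∧ F₂.Nonempty ∧ M.eRk F₁ + M.eRk F₂ ≤ M.eRk F := by
  simp only [connectedSet_iff, not_forall, not_exists, not_and] at hFc
  obtain ⟨e, he, f, hf, hef⟩ := hFc
  set F₁ := {x ∈ F | x = e ∨ ∃ C ⊆ F, M.IsCircuit C ∧ e ∈ C ∧ x ∈ C}
  have hF₁F : F₁ ⊆ F := sep_subset _ _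
  have hclosed : ∀ C ⊆ F, M.IsCircuit C → ∀ x ∈ C, x ∈ F₁ → C ⊆ F₁ := by
    rintro C hCF hC x hxC ⟨-, rfl | ⟨C', hC'F, hC', heC', hxC'⟩⟩ y hyC
    · exact ⟨hCF hyC, Or.inr ⟨C, hCF, hC, hxC, hyC⟩⟩
    · obtain ⟨D, hD, hDc, heD, hyD⟩ :=
        hC'.exists_isCircuit_of_inter_nonempty hC ⟨x, hxC', hxC⟩ heC' hyC
      exact ⟨hCF hyC, Or.inr ⟨D, hD.trans (union_subset hC'F hCF), hDc, heD, hyD⟩⟩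
  have hF₂ : (F \ F₁).Nonempty := by
    by_cases hfF₁ : f ∈ F₁
    · obtain rfl : f = e := hfF₁.2.resolve_right fun ⟨C, hCF, hC, heC, hfC⟩ ↦ hef C hCF hC heC hfC
      obtain ⟨g, hgF, hgf⟩ := hF.exists_ne f
      refine ⟨g, hgF, fun ⟨_, hg⟩ ↦ ?_⟩
      obtain hgf' | ⟨C, hCF, hC, hfC, -⟩ := hg
      exacts [hgf hgf', hef C hCF hC hfC hfC]
    · exact ⟨f, hf, hfF₁⟩
  refine ⟨F₁, F \ F₁, union_sdiff_cancel hF₁F, ⟨e, he, Or.inl rfl⟩, hF₂, ?_⟩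
  conv_rhs => rw [← union_sdiff_cancel hF₁F]
  refine eRk_add_eRk_le_of_forall_isCircuit disjoint_sdiff_right fun C hC hCc ↦ ?_
  rw [union_sdiff_cancel hF₁F] at hC
  by_cases hmeet : ∃ x ∈ C, x ∈ F₁
  · obtain ⟨x, hxC, hx⟩ := hmeet
    exact Or.inl (hclosed C hC hCc x hxC hx)
  · push Not at hmeet
    exact Or.inr fun y hy ↦ ⟨hC hy, hmeet y hy⟩

end Matroid

section Sequences

variable {X : Set (Set α)} {S S₁ S₂ : List (Set α)} {Y B : Set α} {x : α}

lemma mem_unionList : x ∈ unionList S ↔ ∃ Y ∈ S, x ∈ Y := by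
  simp [unionList]

@[simp] lemma unionList_nil : unionList ([] : List (Set α)) = ∅ := by
  simp [unionList]

@[simp] lemma unionList_singleton : unionList [Y] = Y := by
  simp [unionList]

lemma unionList_append_s4 : unionList (S₁ ++ S₂) = unionList S₁ ∪ unionList S₂ := by
  ext x
  simp only [mem_unionList, List.mem_append, mem_union, or_and_right, exists_or]

lemma subset_unionList (hY : Y ∈ S) : Y ⊆ unionList S :=
  subset_biUnion_of_mem (u := id) hY

lemma unionList_subset_iff : unionList S ⊆ B ↔ ∀ Y ∈ S, Y ⊆ B :=
  iUnion₂_subset_iff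

lemma properSeq_iff (hX : ∀ Y ∈ X, Y.Nonempty) : ProperSeq X S ↔
    (∀ Y ∈ S, Y ∈ X) ∧ ∀ i (hi : i < S.length), ¬ S[i] ⊆ unionList (S.take i) := by
  refine and_congr_right fun hSX ↦ ⟨fun h i hi ↦ ?_, fun h i _ ↦ h i i.2⟩
  rcases Nat.eq_zero_or_pos i with rfl | hpos
  · simpa [subset_empty_iff] using (hX _ (hSX _ (List.getElem_mem hi))).ne_empty
  · exact h ⟨i, hi⟩ hpos

lemma ProperSeq.append (hX : ∀ Y ∈ X, Y.Nonempty) (h₁ : ProperSeq X S₁) (h₂ : ProperSeq X S₂)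
    (hdisj : Disjoint (unionList S₁) (unionList S₂)) : ProperSeq X (S₁ ++ S₂) := by
  rw [properSeq_iff hX] at h₁ h₂ ⊢
  refine ⟨fun Y hY ↦ (List.mem_append.1 hY).elim (h₁.1 Y) (h₂.1 Y), fun i hi hsub ↦ ?_⟩
  rw [List.take_append] at hsub
  rcases lt_or_ge i S₁.length with hi₁ | hi₁
  · rw [List.getElem_append_left hi₁, Nat.sub_eq_zero_of_le hi₁.le, List.take_zero,
      List.append_nil] at hsub
    exact h₁.2 i hi₁ hsub
  · rw [List.getElem_append_right hi₁, List.take_of_length_le hi₁, unionList_append_s4] at hsub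
    have hi₂ : i - S₁.length < S₂.length := by
      rw [List.length_append] at hi
      omega
    exact h₂.2 _ hi₂ (Disjoint.subset_right_of_subset_union hsub
      (hdisj.symm.mono_left (subset_unionList (List.getElem_mem hi₂))))

lemma ProperSeq.of_append_singleton_s4 (hX : ∀ Y ∈ X, Y.Nonempty) (h : ProperSeq X (S ++ [Y])) :
    ProperSeq X S ∧ Y ∈ X ∧ ¬ Y ⊆ unionList S := by
  rw [properSeq_iff hX] at h ⊢
  refine ⟨⟨fun Z hZ ↦ h.1 Z (by simp [hZ]), fun i hi ↦ ?_⟩, h.1 Y (by simp), ?_⟩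
  · have := h.2 i (by simp only [List.length_append, List.length_singleton]; omega)
    rwa [List.getElem_append_left hi, List.take_append, Nat.sub_eq_zero_of_le hi.le,
      List.take_zero, List.append_nil] at this
  · simpa using h.2 S.length (by simp)

variable {M : Matroid α}

lemma ProperSeq.unionList_subset_ground (hX : ∀ Y ∈ X, M.IsCircuit Y) (hS : ProperSeq X S) :
    unionList S ⊆ M.E :=
  unionList_subset_iff.2 fun Y hY ↦ (hX Y (hS.1 Y hY)).subset_ground

lemma ProperSeq.eRk_add_length_le_encard (hX : ∀ Y ∈ X, M.IsCircuit Y) (hS : ProperSeq X S)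
    (hSB : unionList S ⊆ B) : M.eRk B + S.length ≤ B.encard := by
  induction S using List.reverseRecOn generalizing B with
  | nil => simpa using M.eRk_le_encard B
  | append_singleton S Y ih =>
    obtain ⟨hS', hYX, hYS⟩ := hS.of_append_singleton_s4 fun Y hY ↦ (hX Y hY).nonempty
    obtain ⟨e, heY, heS⟩ := not_subset.1 hYS
    rw [unionList_append_s4, unionList_singleton, union_subset_iff] at hSB
    have heB : e ∈ B := hSB.2 heY
    -- `e` is spanned by the rest of the circuit `Y`, so deleting it from `B` keeps the rank
    have hcl : e ∈ M.closure (B \ {e}) := M.closure_subset_closure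
      (sdiff_subset_sdiff_left hSB.2) ((hX Y hYX).mem_closure_sdiff_singleton_of_mem heY)
    have hrk : M.eRk B = M.eRk (B \ {e}) := calc
      M.eRk B = M.eRk (insert e (B \ {e})) := by rw [insert_sdiff_singleton, insert_eq_of_mem heB]
      _ = M.eRk (B \ {e}) := by
        rw [← M.eRk_closure_eq, Matroid.closure_insert_eq_of_mem_closure hcl, M.eRk_closure_eq]
    have hSBe : unionList S ⊆ B \ {e} := fun x hx ↦ ⟨hSB.1 hx, by rintro rfl; exact heS hx⟩
    rw [← encard_sdiff_singleton_add_one heB, hrk, List.length_append, List.length_singleton,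
      Nat.cast_add, Nat.cast_one, ← add_assoc]
    exact add_le_add (ih hS' hSBe) le_rfl

lemma ProperSeq.eRk_add_length_le_s4 (hX : ∀ Y ∈ X, M.IsCircuit Y) (hS : ProperSeq X S)
    (F : Set α) : M.eRk F + S.length ≤ (F ∪ unionList S).encard :=
  (add_le_add (M.eRk_mono subset_union_left) le_rfl).trans
    (hS.eRk_add_length_le_encard hX subset_union_right)

end Sequences

namespace Matroid

variable {M : Matroid α} {X : Set (Set α)} {S : List (Set α)} {F F₁ F₂ I : Set α}

/-- Some proper `X`-sequence `S` has `val(F, S) ≤ r(F)`; stated in `ℕ∞` to avoid subtraction. -/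
def ValLeRk (M : Matroid α) (X : Set (Set α)) (F : Set α) : Prop :=
  ∃ S, ProperSeq X S ∧ (F ∪ unionList S).encard ≤ M.eRk F + S.length

lemma Indep.valLeRk (hF : M.Indep F) : M.ValLeRk X F :=
  ⟨[], ⟨by simp, fun i ↦ i.elim0⟩, by simp [hF.eRk_eq_encard]⟩

lemma ValLeRk.of_closure (hF : F ⊆ M.E) (h : M.ValLeRk X (M.closure F)) : M.ValLeRk X F := by
  obtain ⟨S, hS, hle⟩ := h
  refine ⟨S, hS, le_trans ?_ (hle.trans_eq (by rw [eRk_closure_eq]))⟩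
  exact encard_le_encard (union_subset_union_left _ (M.subset_closure F hF))

lemma eRk_union_unionList_le (hX : ∀ Y ∈ X, M.IsCircuit Y) (hS : ProperSeq X S)
    (hle : (F ∪ unionList S).encard ≤ M.eRk F + S.length) :
    M.eRk (F ∪ unionList S) ≤ M.eRk F :=
  (ENat.add_le_add_iff_right (ENat.natCast_ne_top _)).1
    ((hS.eRk_add_length_le_encard hX subset_union_right).trans hle)

lemma ValLeRk.union [M.RankFinite] [M.Loopless] (hX : ∀ Y ∈ X, M.IsCircuit Y)
    (h₁ : M.ValLeRk X F₁) (h₂ : M.ValLeRk X F₂) (hr : M.eRk F₁ + M.eRk F₂ ≤ M.eRk (F₁ ∪ F₂)) :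
    M.ValLeRk X (F₁ ∪ F₂) := by
  obtain ⟨S₁, hS₁, hle₁⟩ := h₁
  obtain ⟨S₂, hS₂, hle₂⟩ := h₂
  set G₁ := F₁ ∪ unionList S₁
  set G₂ := F₂ ∪ unionList S₂
  -- submodularity, with `r(Gᵢ) = r(Fᵢ)`, leaves no room for a non-loop in `G₁ ∩ G₂`
  have hr₀ : M.eRk (G₁ ∩ G₂) = 0 := by
    have hsub : M.eRk (G₁ ∩ G₂) + M.eRk (G₁ ∪ G₂) ≤ 0 + M.eRk (G₁ ∪ G₂) := calc
      _ ≤ M.eRk G₁ + M.eRk G₂ := M.eRk_inter_add_eRk_union_le G₁ G₂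
      _ ≤ M.eRk F₁ + M.eRk F₂ :=
        add_le_add (eRk_union_unionList_le hX hS₁ hle₁) (eRk_union_unionList_le hX hS₂ hle₂)
      _ ≤ M.eRk (F₁ ∪ F₂) := hr
      _ ≤ 0 + M.eRk (G₁ ∪ G₂) := by
        rw [zero_add]
        exact M.eRk_mono (union_subset_union subset_union_left subset_union_left)
    exact nonpos_iff_eq_zero.1
      ((ENat.add_le_add_iff_right (M.isRkFinite_set _).eRk_lt_top.ne).1 hsub)
  have hdisj : Disjoint (unionList S₁) (unionList S₂) := by
    rw [Set.disjoint_iff]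
    intro x ⟨hx₁, hx₂⟩
    simpa using eRk_eq_zero_iff'.1 hr₀
      ⟨⟨Or.inr hx₁, Or.inr hx₂⟩, hS₁.unionList_subset_ground hX hx₁⟩
  refine ⟨S₁ ++ S₂, hS₁.append (fun Y hY ↦ (hX Y hY).nonempty) hS₂ hdisj, ?_⟩
  calc (F₁ ∪ F₂ ∪ unionList (S₁ ++ S₂)).encard = (G₁ ∪ G₂).encard := by
        rw [unionList_append_s4, union_union_union_comm]
    _ ≤ G₁.encard + G₂.encard := encard_union_le _ _
    _ ≤ (M.eRk F₁ + S₁.length) + (M.eRk F₂ + S₂.length) := add_le_add hle₁ hle₂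
    _ = (M.eRk F₁ + M.eRk F₂) + (S₁ ++ S₂).length := by
        rw [List.length_append, Nat.cast_add, add_add_add_comm]
    _ ≤ M.eRk (F₁ ∪ F₂) + (S₁ ++ S₂).length := add_le_add hr le_rfl

lemma valLeRk_of_forall_connectedSet [M.RankFinite] [M.Loopless] (hX : ∀ Y ∈ X, M.IsCircuit Y)
    (h : ∀ F, M.IsFlat F → ConnectedSet M F → M.ValLeRk X F) (hF : F ⊆ M.E) :
    M.ValLeRk X F := by
  suffices hflat : ∀ r : ℕ∞, ∀ F, M.IsFlat F → M.eRk F = r → M.ValLeRk X F from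
    .of_closure hF (hflat _ _ (M.isFlat_closure F) rfl)
  intro r
  induction r using WellFoundedLT.induction with
  | _ r ih =>
  rintro F hF rfl
  have hlt : ∀ G ⊆ M.E, M.eRk G < M.eRk F → M.ValLeRk X G := fun G hG hGF ↦
    .of_closure hG (ih _ (by rwa [eRk_closure_eq]) _ (M.isFlat_closure G) rfl)
  by_cases hind : M.Indep F
  · exact hind.valLeRk
  by_cases hFc : ConnectedSet M F
  · exact h F hF hFc
  have hFnt : F.Nontrivial := by
    by_contra hFnt
    exact hind (subsingleton_indep (not_nontrivial_iff.1 hFnt) hF.subset_ground)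
  obtain ⟨F₁, F₂, rfl, hF₁, hF₂, hr⟩ := exists_eRk_add_eRk_le_of_not_connectedSet hFnt hFc
  have hpos : ∀ G ⊆ F₁ ∪ F₂, G.Nonempty → 1 ≤ M.eRk G := fun G hG ⟨e, he⟩ ↦
    (eRk_singleton_eq (hF.subset_ground (hG he))).symm.le.trans
      (M.eRk_mono (singleton_subset_iff.2 he))
  have hfin : ∀ G, M.eRk G ≠ ⊤ := fun G ↦ (M.isRkFinite_set G).eRk_lt_top.ne
  refine .union hX (hlt F₁ (subset_union_left.trans hF.subset_ground) ?_)
    (hlt F₂ (subset_union_right.trans hF.subset_ground) ?_) hr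
  · calc M.eRk F₁ < M.eRk F₁ + 1 := (ENat.lt_add_one_iff (hfin _)).2 le_rfl
      _ ≤ M.eRk F₁ + M.eRk F₂ := add_le_add le_rfl (hpos F₂ subset_union_right hF₂)
      _ ≤ _ := hr
  · calc M.eRk F₂ < 1 + M.eRk F₂ := by
          rw [add_comm]; exact (ENat.lt_add_one_iff (hfin _)).2 le_rfl
      _ ≤ M.eRk F₁ + M.eRk F₂ := add_le_add (hpos F₁ subset_union_left hF₁) le_rfl
      _ ≤ _ := hr

lemma Indep.indep_of_valLeRk {N : Matroid α} [M.RankFinite] (hX : ∀ Y ∈ X, N.IsCircuit Y)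
    (hI : N.Indep I) (h : M.ValLeRk X I) : M.Indep I := by
  obtain ⟨S, hS, hle⟩ := h
  have hlow := hS.eRk_add_length_le_s4 hX I
  rw [hI.eRk_eq_encard] at hlow
  exact (M.isRkFinite_set I).indep_of_encard_le_eRk
    ((ENat.add_le_add_iff_right (ENat.natCast_ne_top _)).1 (hlow.trans hle))

end Matroid

section Valuation

variable {M : Matroid α} {X : Set (Set α)} {S : List (Set α)} {F : Set α}

lemma mrk_eq_eRk [M.RankFinite] (F : Set α) : (mrk M F : ℕ∞) = M.eRk F := by
  obtain ⟨I, hI⟩ := M.exists_isBasis' F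
  have hmax : IsGreatest {n | ∃ I ⊆ F, M.Indep I ∧ I.ncard = n} I.ncard := by
    refine ⟨⟨I, hI.subset, hI.indep, rfl⟩, ?_⟩
    rintro _ ⟨J, hJF, hJ, rfl⟩
    rw [← Nat.cast_le (α := ℕ∞), hJ.finite.cast_ncard_eq, hI.indep.finite.cast_ncard_eq,
      hI.encard_eq_eRk]
    exact hJ.encard_le_eRk_of_subset hJF
  rw [mrk, hmax.csSup_eq, hI.indep.finite.cast_ncard_eq, hI.encard_eq_eRk]

lemma le_valSeq_iff {r : ℕ} (h : (F ∪ unionList S).Finite) :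
    (r : ℤ) ≤ valSeq F S ↔ (r : ℕ∞) + S.length ≤ (F ∪ unionList S).encard := by
  rw [valSeq, ← h.cast_ncard_eq, le_sub_iff_add_le]
  norm_cast

lemma valSeq_le_iff {r : ℕ} (h : (F ∪ unionList S).Finite) :
    valSeq F S ≤ r ↔ (F ∪ unionList S).encard ≤ r + S.length := by
  rw [valSeq, ← h.cast_ncard_eq, sub_le_iff_le_add]
  norm_cast

lemma valX_eq_mrk [M.Finite] (hX : ∀ Y ∈ X, M.IsCircuit Y) (hF : F ⊆ M.E) (h : M.ValLeRk X F) :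
    valX X F = mrk M F := by
  have hfin : ∀ S, ProperSeq X S → (F ∪ unionList S).Finite := fun S hS ↦
    M.ground_finite.subset (union_subset hF (hS.unionList_subset_ground hX))
  have hlow : ∀ S, ProperSeq X S → (mrk M F : ℤ) ≤ valSeq F S := fun S hS ↦ by
    rw [le_valSeq_iff (hfin S hS), mrk_eq_eRk]
    exact hS.eRk_add_length_le_s4 hX F
  obtain ⟨S, hS, hle⟩ := h
  refine IsLeast.csInf_eq ⟨⟨S, hS, le_antisymm (hlow S hS) ?_⟩, ?_⟩
  · rwa [valSeq_le_iff (hfin S hS), mrk_eq_eRk]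
  · rintro _ ⟨T, hT, rfl⟩
    exact hlow T hT

end Valuation

theorem connected_flat_criterion_general (E : Set α) (hE : E.Finite) (X : Set (Set α))
    (M : Matroid α) (hM : IsXMatroid E X M)
    (hloopless : ∀ e ∈ E, M.Indep {e})
    (hflats : ∀ F ⊆ E, M.closure F = F → ConnectedSet M F →
      ∃ S : List (Set α), ProperSeq X S ∧ (mrk M F : ℤ) = valSeq F S) :
    (∀ F ⊆ E, (mrk M F : ℤ) = valX X F) ∧
    ∀ N : Matroid α, IsXMatroid E X N → WeakLE N M := by
  obtain ⟨rfl, hX⟩ := hM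
  simp only [Matroid.isCircuit'_iff] at hX
  have : M.Finite := ⟨hE⟩
  have : M.Loopless :=
    Matroid.loopless_iff_forall_isNonloop.2 fun e he ↦ Matroid.indep_singleton.1 (hloopless e he)
  have hconn : ∀ F, M.IsFlat F → ConnectedSet M F → M.ValLeRk X F := fun F hF hFc ↦ by
    obtain ⟨S, hS, heq⟩ := hflats F hF.subset_ground hF.closure hFc
    refine ⟨S, hS, ?_⟩
    rw [← mrk_eq_eRk, ← valSeq_le_iff (hE.subset
      (union_subset hF.subset_ground (hS.unionList_subset_ground hX))), ← heq]
  have hval : ∀ F ⊆ M.E, M.ValLeRk X F :=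
    fun F ↦ Matroid.valLeRk_of_forall_connectedSet hX hconn
  refine ⟨fun F hF ↦ (valX_eq_mrk hX hF (hval F hF)).symm, fun N ⟨hNE, hNX⟩ I hI ↦ ?_⟩
  simp only [Matroid.isCircuit'_iff] at hNX
  exact hI.indep_of_valLeRk hNX (hval I (hNE ▸ hI.subset_ground))

theorem connected_flat_criterion (E : Set α) (hE : E.Finite) (X : Set (Set α))
    (hXE : ∀ Y ∈ X, Y ⊆ E) (M : Matroid α) (hM : IsXMatroid E X M)
    (hloopless : ∀ e ∈ E, M.Indep {e})
    (hflats : ∀ F ⊆ E, M.closure F = F → ConnectedSet M F →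
      ∃ S : List (Set α), ProperSeq X S ∧ (mrk M F : ℤ) = valSeq F S) :
    (∀ F ⊆ E, (mrk M F : ℤ) = valX X F) ∧
    ∀ N : Matroid α, IsXMatroid E X N → WeakLE N M :=
  connected_flat_criterion_general E hE X M hM hloopless hflats
end
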